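/- arXiv:math/0209146 — 5 statements merged into one kernel-verified Lean document; each statement's English description precedes it below -/
import Mathlib

section
/- Under hypotheses (i)–(vi), there exists a positive constant c5 such that almost surely limsup_{n→∞} X_n/n > c5. -/
/-!
Cut time into blocks of length `L = K + m`. Within a block starting at `n`, (v) and (vi) bound the
expected increment of `f` at step `j` by `(c3 + c4) P(A_j) - c4`, while (ii) and (iii) make the
expected increment of `X` over the whole block at least `c1 P(A_j)` for each of its first `K`
steps `j`. For `K` large this makes `f(tL) + βt - κ X(tL)` a supermartingale for some `β, κ > 0`.
As `f` is bounded below, on the event that `X(tL) ≤ ε tL` for all large `t`, where `κ ε L = β / 2`,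
this supermartingale would grow linearly, so that event is null.
-/

open MeasureTheory Filter

theorem le_add_of_forall_succ_le_add_one {x : ℕ → ℝ} (hx : ∀ n, x (n + 1) ≤ x n + 1) (a k : ℕ) :
    x (a + k) ≤ x a + k := by
  induction k with
  | zero => simp
  | succ k ih =>
    rw [← add_assoc]; push_cast; linarith [hx (a + k)]

theorem le_limsup_div_of_frequently {x : ℕ → ℝ} (hx : ∀ n, x (n + 1) ≤ x n + 1) {ε : ℝ}
    (h : ∃ᶠ n in atTop, ε ≤ x n / n) : ε ≤ atTop.limsup (fun n => x n / n) := by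
  refine le_limsup_of_frequently_le h (isBoundedUnder_of ⟨|x 0| + 1, fun n => ?_⟩)
  rcases Nat.eq_zero_or_pos n with rfl | hn
  · simp only [CharP.cast_eq_zero, div_zero]; positivity
  · have hn' : (1 : ℝ) ≤ n := by exact_mod_cast hn
    have := le_add_of_forall_succ_le_add_one hx 0 n
    rw [zero_add] at this
    rw [div_le_iff₀ (by positivity)]
    nlinarith [le_abs_self (x 0), abs_nonneg (x 0)]

section

variable {Ω : Type*} {m m0 : MeasurableSpace Ω} {μ : Measure Ω} [IsFiniteMeasure μ]

theorem setIntegral_le_of_ae_condExp_le (hm : m ≤ m0) [SigmaFinite (μ.trim hm)] {g : Ω → ℝ}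
    (hg : Integrable g μ) {s : Set Ω} (hs : MeasurableSet[m] s) {c : ℝ}
    (h : ∀ᵐ ω ∂μ, ω ∈ s → μ[g|m] ω ≤ c) :
    ∫ ω in s, g ω ∂μ ≤ μ.real s * c := by
  rw [← setIntegral_condExp hm hg hs, ← smul_eq_mul, ← setIntegral_const]
  exact setIntegral_mono_ae_restrict integrable_condExp.integrableOn integrableOn_const
    ((ae_restrict_iff' (hm _ hs)).2 h)

theorem le_setIntegral_of_ae_le_condExp (hm : m ≤ m0) [SigmaFinite (μ.trim hm)] {g : Ω → ℝ}
    (hg : Integrable g μ) {s : Set Ω} (hs : MeasurableSet[m] s) {c : ℝ}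
    (h : ∀ᵐ ω ∂μ, ω ∈ s → c ≤ μ[g|m] ω) :
    μ.real s * c ≤ ∫ ω in s, g ω ∂μ := by
  rw [← setIntegral_condExp hm hg hs, ← smul_eq_mul, ← setIntegral_const]
  exact setIntegral_mono_ae_restrict integrableOn_const integrable_condExp.integrableOn
    ((ae_restrict_iff' (hm _ hs)).2 h)

theorem setIntegral_le_of_le_on_of_condExp_le_off (hm : m ≤ m0) [SigmaFinite (μ.trim hm)]
    {g : Ω → ℝ} (hg : Integrable g μ) {A s : Set Ω} (hA : MeasurableSet[m] A)
    (hs : MeasurableSet[m] s) {a b : ℝ} (hon : ∀ᵐ ω ∂μ, ω ∈ A → g ω ≤ a)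
    (hoff : ∀ᵐ ω ∂μ, ω ∉ A → μ[g|m] ω ≤ -b) :
    ∫ ω in s, g ω ∂μ ≤ (a + b) * μ.real (s ∩ A) - b * μ.real s := by
  have hon_int : ∫ ω in s ∩ A, g ω ∂μ ≤ μ.real (s ∩ A) * a := by
    rw [← smul_eq_mul, ← setIntegral_const]
    exact setIntegral_mono_ae_restrict hg.integrableOn integrableOn_const
      ((ae_restrict_iff' (hm _ (hs.inter hA))).2 (hon.mono fun ω h hω => h hω.2))
  have hoff_int : ∫ ω in s \ A, g ω ∂μ ≤ μ.real (s \ A) * -b :=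
    setIntegral_le_of_ae_condExp_le hm hg (hs.diff hA) (hoff.mono fun ω h hω => h hω.2)
  rw [← integral_inter_add_sdiff (hm _ hA) hg.integrableOn]
  rw [← measureReal_inter_add_sdiff (μ := μ) (s := s) (hm _ hA)]
  linarith

theorem MeasureTheory.Submartingale.mul_measureReal_inter_le_setIntegral_sub
    {ℱ : Filtration ℕ m0} {X : ℕ → Ω → ℝ} (hX : Submartingale X ℱ μ) {w k : ℕ} {A s : Set Ω}
    (hA : MeasurableSet[ℱ w] A) (hs : MeasurableSet[ℱ w] s) {c : ℝ}
    (h : ∀ᵐ ω ∂μ, ω ∈ A → c ≤ μ[fun ω => X (w + k) ω - X w ω | ℱ w] ω) :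
    c * μ.real (s ∩ A) ≤ ∫ ω in s, X (w + k) ω ∂μ - ∫ ω in s, X w ω ∂μ := by
  have hint : Integrable (fun ω => X (w + k) ω - X w ω) μ :=
    (hX.integrable _).sub (hX.integrable _)
  have hon := le_setIntegral_of_ae_le_condExp (ℱ.le w) hint (hs.inter hA)
    (h.mono fun ω h hω => h hω.2)
  have hoff := le_setIntegral_of_ae_le_condExp (ℱ.le w) hint (hs.diff hA) (c := 0)
    ((hX.condExp_sub_nonneg (Nat.le_add_right w k)).mono fun ω h _ => h)
  rw [← integral_sub (hX.integrable _).integrableOn (hX.integrable _).integrableOn,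
    ← integral_inter_add_sdiff (ℱ.le w _ hA) hint.integrableOn]
  linarith

end

section

variable {Ω : Type*} {m0 : MeasurableSpace Ω}

def MeasureTheory.Filtration.comp {ι κ : Type*} [Preorder ι] [Preorder κ]
    (ℱ : Filtration κ m0) {φ : ι → κ} (hφ : Monotone φ) : Filtration ι m0 :=
  ⟨fun i => ℱ (φ i), fun _ _ h => ℱ.mono (hφ h), fun i => ℱ.le (φ i)⟩

variable {μ : Measure Ω} [IsFiniteMeasure μ]

theorem MeasureTheory.Supermartingale.ae_frequently_notMem {𝒢 : Filtration ℕ m0}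
    {Y : ℕ → Ω → ℝ} (hY : Supermartingale Y 𝒢 μ) {P : ℕ → Set Ω}
    (hP : ∀ t, MeasurableSet[𝒢 t] (P t)) {g : ℕ → ℝ} (hg : Tendsto g atTop atTop)
    (hlow : ∀ t, ∀ᵐ ω ∂μ, ω ∈ P t → g t ≤ Y t ω)
    (hnext : ∀ t, ∀ᵐ ω ∂μ, ω ∈ P t → 0 ≤ Y (t + 1) ω) :
    ∀ᵐ ω ∂μ, ∃ᶠ t in atTop, ω ∉ P t := by
  suffices h : ∀ t₀, μ (⋂ t, P (t₀ + t)) = 0 by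
    refine (ae_all_iff.2 fun t₀ => measure_eq_zero_iff_ae_notMem.1 (h t₀)).mono
      fun ω hω => frequently_atTop.2 fun t₀ => ?_
    obtain ⟨j, hj⟩ : ∃ j, ω ∉ P (t₀ + j) := by simpa using hω t₀
    exact ⟨t₀ + j, Nat.le_add_right _ _, hj⟩
  intro t₀
  let S : ℕ → Set Ω := fun t => ⋂ j ∈ Finset.range (t + 1), P (t₀ + j)
  have hS : ∀ t, MeasurableSet[𝒢 (t₀ + t)] (S t) := fun t =>
    Finset.measurableSet_biInter _ fun j hj =>
      𝒢.mono (by simp at hj; omega) _ (hP (t₀ + j))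
  have hSP : ∀ t, S t ⊆ P (t₀ + t) := fun t =>
    Set.biInter_subset_of_mem (Finset.mem_range.2 t.lt_succ_self)
  have hS_anti : ∀ t, S (t + 1) ⊆ S t := fun t =>
    Set.biInter_subset_biInter_left fun j hj => by simp at hj ⊢; omega
  have hBS : ∀ t, ⋂ t, P (t₀ + t) ⊆ S t := fun t =>
    Set.subset_iInter₂ fun j _ => Set.iInter_subset _ j
  -- `I t` is nonincreasing, yet at least `g (t₀ + t) * μ (⋂ t, P (t₀ + t))` once `g ≥ 0`.
  let I : ℕ → ℝ := fun t => ∫ ω in S t, Y (t₀ + t) ω ∂μ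
  have hI_anti : Antitone I := antitone_nat_of_succ_le fun t => by
    have hnonneg : 0 ≤ᵐ[μ.restrict (S t)] Y (t₀ + t + 1) :=
      (ae_restrict_iff' (𝒢.le _ _ (hS t))).2 <|
        (hnext (t₀ + t)).mono fun ω h hω => h (hSP t hω)
    calc I (t + 1) ≤ ∫ ω in S t, Y (t₀ + t + 1) ω ∂μ :=
          setIntegral_mono_set (hY.integrable _).integrableOn hnonneg (hS_anti t).eventuallyLE
      _ ≤ I t := hY.setIntegral_le (Nat.le_succ _) (hS t)
  have hI_lower : ∀ t, 0 ≤ g (t₀ + t) → g (t₀ + t) * μ.real (⋂ t, P (t₀ + t)) ≤ I t := by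
    intro t hgt
    calc g (t₀ + t) * μ.real (⋂ t, P (t₀ + t)) ≤ μ.real (S t) * g (t₀ + t) := by
          rw [mul_comm]; exact mul_le_mul_of_nonneg_right (measureReal_mono (hBS t)) hgt
      _ ≤ I t := by
          rw [← smul_eq_mul, ← setIntegral_const]
          exact setIntegral_mono_ae_restrict integrableOn_const (hY.integrable _).integrableOn
            ((ae_restrict_iff' (𝒢.le _ _ (hS t))).2 <|
              (hlow (t₀ + t)).mono fun ω h hω => h (hSP t hω))
  rw [← measureReal_eq_zero_iff]
  by_contra hB
  have hpos : 0 < μ.real (⋂ t, P (t₀ + t)) := lt_of_le_of_ne measureReal_nonneg (Ne.symm hB)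
  have hg' : Tendsto (fun t => g (t₀ + t)) atTop atTop :=
    hg.comp (tendsto_atTop_mono (fun t => Nat.le_add_left t t₀) tendsto_id)
  obtain ⟨t, hgt, hbig⟩ := ((hg'.eventually_ge_atTop 0).and
    ((hg'.atTop_mul_const hpos).eventually_gt_atTop (I 0))).exists
  exact (hbig.trans_le ((hI_lower t hgt).trans (hI_anti (Nat.zero_le t)))).false

theorem setIntegral_block_drift_le {ℱ : Filtration ℕ m0} {X f : ℕ → Ω → ℝ} {A : ℕ → Set Ω}
    {c1 c3 c4 : ℝ} {m : ℕ} (hX : Submartingale X ℱ μ) (hf : ∀ n, Integrable (f n) μ)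
    (hA : ∀ n, MeasurableSet[ℱ n] (A n)) (hc1 : 0 < c1) (hc34 : 0 ≤ c3 + c4)
    (hXA : ∀ n, ∀ᵐ ω ∂μ, ω ∈ A n → c1 ≤ μ[fun ω => X (n + m) ω - X n ω | ℱ n] ω)
    (hfA : ∀ n, ∀ᵐ ω ∂μ, ω ∈ A n → f (n + 1) ω - f n ω ≤ c3)
    (hfAc : ∀ n, ∀ᵐ ω ∂μ, ω ∉ A n → μ[fun ω => f (n + 1) ω - f n ω | ℱ n] ω ≤ -c4)
    (K n : ℕ) {s : Set Ω} (hs : MeasurableSet[ℱ n] s) :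
    ∫ ω in s, f (n + (K + m)) ω ∂μ - ∫ ω in s, f n ω ∂μ + (c4 * K - c3 * m) * μ.real s ≤
      (c3 + c4) * K / c1 * (∫ ω in s, X (n + (K + m)) ω ∂μ - ∫ ω in s, X n ω ∂μ) := by
  set p : ℕ → ℝ := fun j => μ.real (s ∩ A (n + j))
  set D := ∫ ω in s, X (n + (K + m)) ω ∂μ - ∫ ω in s, X n ω ∂μ
  have hs' : ∀ j, MeasurableSet[ℱ (n + j)] s := fun j => ℱ.mono (Nat.le_add_right n j) _ hs
  have hf_step : ∀ j, ∫ ω in s, f (n + (j + 1)) ω ∂μ - ∫ ω in s, f (n + j) ω ∂μ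
      ≤ (c3 + c4) * p j - c4 * μ.real s := fun j => by
    rw [← integral_sub (hf _).integrableOn (hf _).integrableOn]
    exact setIntegral_le_of_le_on_of_condExp_le_off (ℱ.le _) ((hf _).sub (hf _)) (hA _) (hs' j)
      (hfA _) (hfAc _)
  have hf_block : ∫ ω in s, f (n + (K + m)) ω ∂μ - ∫ ω in s, f n ω ∂μ
      ≤ (c3 + c4) * ((∑ j ∈ Finset.range K, p j) + ∑ j ∈ Finset.range m, p (K + j))
        - (K + m) * (c4 * μ.real s) := by
    have := Finset.sum_le_sum fun j (_ : j ∈ Finset.range (K + m)) => hf_step j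
    rw [Finset.sum_range_sub (fun j => ∫ ω in s, f (n + j) ω ∂μ), Finset.sum_sub_distrib,
      ← Finset.mul_sum, Finset.sum_range_add, Finset.sum_const, Finset.card_range] at this
    simpa using this
  have hX_window : ∀ j < K, c1 * p j ≤ D := fun j hj => by
    have h₁ := hX.mul_measureReal_inter_le_setIntegral_sub (hA _) (hs' j) (hXA (n + j))
    have h₂ := hX.setIntegral_le (Nat.le_add_right n j) hs
    have h₃ := hX.setIntegral_le (i := n + j + m) (j := n + (K + m)) (by omega)
      (ℱ.mono (by omega) _ hs)
    exact h₁.trans (by linarith)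
  have hp_head : (∑ j ∈ Finset.range K, p j) ≤ K * D / c1 := by
    rw [le_div_iff₀ hc1, Finset.sum_mul]
    calc ∑ j ∈ Finset.range K, p j * c1 ≤ ∑ j ∈ Finset.range K, D :=
          Finset.sum_le_sum fun j hj => by linarith [hX_window j (Finset.mem_range.1 hj)]
      _ = K * D := by simp
  have hp_tail : ∑ j ∈ Finset.range m, p (K + j) ≤ m * μ.real s := by
    calc ∑ j ∈ Finset.range m, p (K + j) ≤ ∑ j ∈ Finset.range m, μ.real s :=
          Finset.sum_le_sum fun j _ => measureReal_mono Set.inter_subset_left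
      _ = m * μ.real s := by simp
  have := mul_le_mul_of_nonneg_left (add_le_add hp_head hp_tail) hc34
  calc _ ≤ (c3 + c4) * (K * D / c1 + m * μ.real s) - (K + m) * (c4 * μ.real s)
          + (c4 * K - c3 * m) * μ.real s := by linarith
    _ = (c3 + c4) * K / c1 * D := by ring

theorem supermartingale_of_setIntegral_block_le {ℱ : Filtration ℕ m0} {F X : ℕ → Ω → ℝ}
    (hFadp : StronglyAdapted ℱ F) (hXadp : StronglyAdapted ℱ X) (hF : ∀ n, Integrable (F n) μ)
    (hX : ∀ n, Integrable (X n) μ) {L : ℕ} {C β κ : ℝ}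
    (hblock : ∀ n s, MeasurableSet[ℱ n] s → ∫ ω in s, F (n + L) ω ∂μ - ∫ ω in s, F n ω ∂μ
      + β * μ.real s ≤ κ * (∫ ω in s, X (n + L) ω ∂μ - ∫ ω in s, X n ω ∂μ)) :
    Supermartingale (fun t ω => F (t * L) ω + (C + β * t) - κ * X (t * L) ω)
      (ℱ.comp (mul_left_mono (a := L))) μ := by
  have hint : ∀ t, Integrable (fun ω => F (t * L) ω + (C + β * t) - κ * X (t * L) ω) μ :=
    fun t => ((hF _).add (integrable_const _)).sub ((hX _).const_mul κ)
  refine supermartingale_of_setIntegral_succ_le (fun t =>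
    ((hFadp _).add stronglyMeasurable_const).sub (stronglyMeasurable_const.mul (hXadp _)))
    hint fun t s hs => ?_
  have hsplit : ∀ t, ∫ ω in s, (F (t * L) ω + (C + β * t) - κ * X (t * L) ω) ∂μ
      = ∫ ω in s, F (t * L) ω ∂μ + μ.real s * (C + β * t) - κ * ∫ ω in s, X (t * L) ω ∂μ := by
    intro t
    have hFc : IntegrableOn (fun ω => F (t * L) ω + (C + β * t)) s μ :=
      ((hF _).add (integrable_const _)).integrableOn
    rw [integral_sub hFc ((hX _).const_mul κ).integrableOn,
      integral_add (hF _).integrableOn integrableOn_const, setIntegral_const, smul_eq_mul,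
      integral_const_mul]
  have h := hblock (t * L) s hs
  rw [hsplit, hsplit, show (t + 1) * L = t * L + L by ring]
  push_cast
  linarith

theorem exists_supermartingale_sample {ℱ : Filtration ℕ m0} {X f : ℕ → Ω → ℝ}
    {A : ℕ → Set Ω} {c1 c3 c4 : ℝ} {m : ℕ} (hX : Submartingale X ℱ μ)
    (hfadp : StronglyAdapted ℱ f) (hf : ∀ n, Integrable (f n) μ)
    (hA : ∀ n, MeasurableSet[ℱ n] (A n)) (hc1 : 0 < c1) (hc34 : 0 < c3 + c4) (hc4 : 0 < c4)
    (hXA : ∀ n, ∀ᵐ ω ∂μ, ω ∈ A n → c1 ≤ μ[fun ω => X (n + m) ω - X n ω | ℱ n] ω)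
    (hfA : ∀ n, ∀ᵐ ω ∂μ, ω ∈ A n → f (n + 1) ω - f n ω ≤ c3)
    (hfAc : ∀ n, ∀ᵐ ω ∂μ, ω ∉ A n → μ[fun ω => f (n + 1) ω - f n ω | ℱ n] ω ≤ -c4) :
    ∃ L : ℕ, 0 < L ∧ ∃ β κ : ℝ, 0 < β ∧ 0 < κ ∧ ∀ C : ℝ,
      Supermartingale (fun t ω => f (t * L) ω + (C + β * t) - κ * X (t * L) ω)
        (ℱ.comp (mul_left_mono (a := L))) μ := by
  set K : ℕ := ⌊c3 * m / c4⌋₊ + 1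
  have hβ : 0 < c4 * K - c3 * m := by
    have := Nat.lt_floor_add_one (c3 * m / c4)
    rw [div_lt_iff₀ hc4] at this
    push_cast [K]
    linarith
  exact ⟨K + m, by omega, _, _, hβ, by positivity, fun C =>
    supermartingale_of_setIntegral_block_le hfadp hX.stronglyAdapted hf hX.integrable
      (setIntegral_block_drift_le hX hf hA hc1 hc34.le hXA hfA hfAc K)⟩

theorem ae_frequently_le_div_of_supermartingale {ℱ : Filtration ℕ m0} {X f : ℕ → Ω → ℝ}
    {c2 β κ : ℝ} {L : ℕ} (hXadp : StronglyAdapted ℱ X) (hL : 0 < L) (hβ : 0 < β) (hκ : 0 < κ)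
    (hY : Supermartingale (fun t ω => f (t * L) ω + (c2 + κ * L + β * t) - κ * X (t * L) ω)
      (ℱ.comp (mul_left_mono (a := L))) μ)
    (hX1 : ∀ᵐ ω ∂μ, ∀ n, X (n + 1) ω ≤ X n ω + 1) (hf : ∀ᵐ ω ∂μ, ∀ n, -c2 < f n ω) :
    ∀ᵐ ω ∂μ, ∃ᶠ n in atTop, β / (2 * κ * L) ≤ X n ω / n := by
  set ε := β / (2 * κ * L)
  have hκεL : ∀ t : ℝ, κ * (ε * (t * L)) = β * t / 2 := fun t => by
    simp only [ε]; field_simp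
  have hesc := hY.ae_frequently_notMem (P := fun t => {ω | X (t * L) ω ≤ ε * (t * L : ℕ)})
    (g := fun t => β * t / 2)
    (fun t => measurableSet_le (hXadp _).measurable measurable_const)
    ((tendsto_natCast_atTop_atTop.const_mul_atTop hβ).atTop_div_const two_pos)
    (fun t => hf.mono fun ω hω hP => by
      have := mul_le_mul_of_nonneg_left hP hκ.le
      push_cast at this ⊢
      linarith [hω (t * L), hκεL t, mul_nonneg hκ.le (Nat.cast_nonneg L)])
    (fun t => (hX1.and hf).mono fun ω hω hP => by
      have := mul_le_mul_of_nonneg_left hP hκ.le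
      have := le_add_of_forall_succ_le_add_one (x := fun n => X n ω) hω.1 (t * L) L
      push_cast [add_one_mul] at *
      nlinarith [hω.2 (t * L + L), hκεL t])
  filter_upwards [hesc] with ω hfreq
  refine (tendsto_id.atTop_mul_const' hL).frequently
    ((hfreq.and_eventually (eventually_gt_atTop 0)).mono fun t ⟨ht, ht0⟩ => ?_)
  rw [le_div_iff₀ (by exact_mod_cast Nat.mul_pos ht0 hL)]
  exact (not_le.1 ht).le

end

theorem technical_lemma_general {Ω : Type*} {m0 : MeasurableSpace Ω} {μ : Measure Ω}
    [IsProbabilityMeasure μ] (ℱ : Filtration ℕ m0)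
    (X f : ℕ → Ω → ℝ) (A : ℕ → Set Ω)
    (hXadp : ∀ n, StronglyMeasurable[ℱ n] (X n))
    (hfadp : ∀ n, StronglyMeasurable[ℱ n] (f n))
    (hAmeas : ∀ n, MeasurableSet[ℱ n] (A n))
    (hXint : ∀ n, Integrable (X n) μ)
    (hfint : ∀ n, Integrable (f n) μ)
    (c1 c2 c3 c4 : ℝ) (hc1 : 0 < c1) (hc3 : 0 < c3) (hc4 : 0 < c4)
    (m : ℕ)
    (h1 : ∀ n, ∀ᵐ ω ∂μ, |X (n + 1) ω - X n ω| ≤ 1)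
    (h2 : ∀ n, 0 ≤ᵐ[μ] μ[fun ω => X (n + 1) ω - X n ω | ℱ n])
    (h3 : ∀ n, ∀ᵐ ω ∂μ, ω ∈ A n → c1 < (μ[fun ω => X (n + m) ω - X n ω | ℱ n]) ω)
    (h4 : ∀ n, ∀ᵐ ω ∂μ, -c2 < f n ω)
    (h5 : ∀ n, ∀ᵐ ω ∂μ,
      (f (n + 1) ω - f n ω) * (A n).indicator (fun _ => (1 : ℝ)) ω < c3)
    (h6 : ∀ n, ∀ᵐ ω ∂μ, ω ∉ A n →
      (μ[fun ω => f (n + 1) ω - f n ω | ℱ n]) ω < -c4) :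
    ∃ c5 : ℝ, 0 < c5 ∧
      ∀ᵐ ω ∂μ, c5 < atTop.limsup (fun n => X n ω / n) := by
  have hX : Submartingale X ℱ μ := submartingale_of_condExp_sub_nonneg_nat hXadp hXint h2
  obtain ⟨L, hL, β, κ, hβ, hκ, hY⟩ := exists_supermartingale_sample (c3 := c3) hX hfadp hfint
    hAmeas hc1 (by linarith) hc4 (fun n => (h3 n).mono fun ω h hω => (h hω).le)
    (fun n => (h5 n).mono fun ω h hω => by
      simpa only [Set.indicator_of_mem hω, mul_one] using h.le)
    (fun n => (h6 n).mono fun ω h hω => (h hω).le)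
  have hX1 : ∀ᵐ ω ∂μ, ∀ n, X (n + 1) ω ≤ X n ω + 1 :=
    ae_all_iff.2 fun n => (h1 n).mono fun ω h => by linarith [(abs_le.1 h).2]
  have hε : 0 < β / (2 * κ * L) := by positivity
  refine ⟨β / (2 * κ * L) / 2, half_pos hε, ?_⟩
  filter_upwards [hX1, ae_frequently_le_div_of_supermartingale hXadp hL hβ hκ (hY (c2 + κ * L))
    hX1 (ae_all_iff.2 h4)] with ω hω hfreq
  exact (half_lt_self hε).trans_le (le_limsup_div_of_frequently hω hfreq)

/-- Lemma 2 ("technical lemma"): under hypotheses (i)–(vi) there is a positive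
constant `c5` such that almost surely `limsup Xₙ/n > c5`. -/
theorem technical_lemma {Ω : Type*} {m0 : MeasurableSpace Ω} {μ : Measure Ω}
    [IsProbabilityMeasure μ] (ℱ : Filtration ℕ m0)
    (hF0 : ∀ s : Set Ω, MeasurableSet[ℱ 0] s → μ s = 0 ∨ μ s = 1)
    (X f : ℕ → Ω → ℝ) (A : ℕ → Set Ω)
    (hXadp : ∀ n, StronglyMeasurable[ℱ n] (X n))
    (hfadp : ∀ n, StronglyMeasurable[ℱ n] (f n))
    (hAmeas : ∀ n, MeasurableSet[ℱ n] (A n))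
    (hXint : ∀ n, Integrable (X n) μ)
    (hfint : ∀ n, Integrable (f n) μ)
    (c1 c2 c3 c4 : ℝ) (hc1 : 0 < c1) (hc2 : 0 < c2) (hc3 : 0 < c3) (hc4 : 0 < c4)
    (m : ℕ) (hm : 0 < m)
    (h1 : ∀ n, ∀ᵐ ω ∂μ, |X (n + 1) ω - X n ω| ≤ 1)
    (h2 : ∀ n, 0 ≤ᵐ[μ] μ[fun ω => X (n + 1) ω - X n ω | ℱ n])
    (h3 : ∀ n, ∀ᵐ ω ∂μ, ω ∈ A n → c1 < (μ[fun ω => X (n + m) ω - X n ω | ℱ n]) ω)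
    (h4 : ∀ n, ∀ᵐ ω ∂μ, -c2 < f n ω)
    (h5 : ∀ n, ∀ᵐ ω ∂μ,
      (f (n + 1) ω - f n ω) * (A n).indicator (fun _ => (1 : ℝ)) ω < c3)
    (h6 : ∀ n, ∀ᵐ ω ∂μ, ω ∉ A n →
      (μ[fun ω => f (n + 1) ω - f n ω | ℱ n]) ω < -c4) :
    ∃ c5 : ℝ, 0 < c5 ∧
      ∀ᵐ ω ∂μ, c5 < atTop.limsup (fun n => X n ω / n) :=
  technical_lemma_general ℱ X f A hXadp hfadp hAmeas hXint hfint c1 c2 c3 c4 hc1 hc3 hc4 m h1 h2 h3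
    h4 h5 h6
end

section
/- Under hypotheses (i)–(iii), for each integer k with 0 ≤ k < m, the process (c1·G_{n,k} − X_{mn+k})_{n≥0} is a supermartingale with respect to the filtration (F_{mn+k})_{n≥0}. -/
/-!
Over one block of `m` steps the process `c1 * G_{n,k} - X_{mn+k}` changes by
`c1 * 1_{A_N} - (X_{N+m} - X_N)` with `N = mn + k`. Given `F_N`, this has non-positive conditional
mean: on `A_N` by (iii), and off `A_N` because (ii) makes `X` a submartingale, so its `m`-step
drift is non-negative.
-/

open MeasureTheory Filter

/-- The sub-filtration `n ↦ ℱ (m * n + k)`. -/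
def skipFiltration {Ω : Type*} {m0 : MeasurableSpace Ω}
    (ℱ : MeasureTheory.Filtration ℕ m0) (m k : ℕ) :
    MeasureTheory.Filtration ℕ m0 where
  seq n := ℱ (m * n + k)
  mono' := fun _ _ hij => ℱ.mono (Nat.add_le_add_right (Nat.mul_le_mul_left m hij) k)
  le' _ := ℱ.le _

section

variable {Ω : Type*} {m0 : MeasurableSpace Ω} {μ : Measure Ω} {ℱ : Filtration ℕ m0}

theorem MeasureTheory.StronglyAdapted.sum_range {β : Type*} [AddCommMonoid β] [TopologicalSpace β]
    [ContinuousAdd β] {h : ℕ → Ω → β} (hh : StronglyAdapted ℱ h) :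
    StronglyAdapted ℱ fun n => ∑ i ∈ Finset.range n, h i := fun _ =>
  Finset.stronglyMeasurable_sum _ fun _ hi =>
    hh.stronglyMeasurable_le (Finset.mem_range.mp hi).le

theorem supermartingale_sum_sub_of_le_condExp_sub [IsFiniteMeasure μ] {Y h : ℕ → Ω → ℝ}
    (hY : StronglyAdapted ℱ Y) (hYint : ∀ n, Integrable (Y n) μ)
    (hh : StronglyAdapted ℱ h) (hhint : ∀ n, Integrable (h n) μ)
    (hle : ∀ n, h n ≤ᵐ[μ] μ[Y (n + 1) - Y n | ℱ n]) :
    Supermartingale (fun n => ∑ i ∈ Finset.range n, h i - Y n) ℱ μ := by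
  have hint : ∀ n, Integrable (∑ i ∈ Finset.range n, h i - Y n) μ := fun n =>
    (integrable_finsetSum' _ fun i _ => hhint i).sub (hYint n)
  refine supermartingale_of_condExp_sub_nonneg_nat (hh.sum_range.sub hY) hint fun n => ?_
  have hstep : (∑ i ∈ Finset.range n, h i - Y n) - (∑ i ∈ Finset.range (n + 1), h i - Y (n + 1))
      = (Y (n + 1) - Y n) - h n := by
    rw [Finset.sum_range_succ]; abel
  rw [hstep]
  have hcond : μ[(Y (n + 1) - Y n) - h n | ℱ n] =ᵐ[μ] μ[Y (n + 1) - Y n | ℱ n] - h n := by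
    refine (condExp_sub ((hYint _).sub (hYint n)) (hhint n) _).trans ?_
    rw [condExp_of_stronglyMeasurable (ℱ.le n) (hh n) (hhint n)]
  filter_upwards [hcond, hle n] with ω hω hleω
  rw [hω, Pi.zero_apply, Pi.sub_apply, sub_nonneg]
  exact hleω

end

theorem supermartingale_skip_general {Ω : Type*} {m0 : MeasurableSpace Ω} {μ : Measure Ω}
    [IsProbabilityMeasure μ] (ℱ : Filtration ℕ m0)
    (X : ℕ → Ω → ℝ) (A : ℕ → Set Ω)
    (hXadp : ∀ n, StronglyMeasurable[ℱ n] (X n))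
    (hAmeas : ∀ n, MeasurableSet[ℱ n] (A n))
    (hXint : ∀ n, Integrable (X n) μ)
    (c1 : ℝ) (m : ℕ)
    (h2 : ∀ n, 0 ≤ᵐ[μ] μ[fun ω => X (n + 1) ω - X n ω | ℱ n])
    (h3 : ∀ n, ∀ᵐ ω ∂μ, ω ∈ A n →
      c1 < (μ[fun ω => X (n + m) ω - X n ω | ℱ n]) ω)
    (k : ℕ) :
    Supermartingale
      (fun n ω =>
        c1 * (∑ i ∈ Finset.range n, (A (m * i + k)).indicator (fun _ => (1 : ℝ)) ω)
          - X (m * n + k) ω)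
      (skipFiltration ℱ m k) μ := by
  have hX : Submartingale X ℱ μ := submartingale_of_condExp_sub_nonneg_nat hXadp hXint h2
  have hdrift : ∀ n, (A (m * n + k)).indicator (fun _ => c1)
      ≤ᵐ[μ] μ[X (m * (n + 1) + k) - X (m * n + k) | ℱ (m * n + k)] := by
    intro n
    rw [show m * (n + 1) + k = m * n + k + m by ring]
    filter_upwards [h3 (m * n + k), hX.condExp_sub_nonneg (Nat.le_add_right _ m)]
      with ω hA hnonneg
    exact Set.indicator_apply_le' (fun hω => (hA hω).le) fun _ => hnonneg
  have hsuper := supermartingale_sum_sub_of_le_condExp_sub (ℱ := skipFiltration ℱ m k)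
    (Y := fun n => X (m * n + k)) (h := fun n => (A (m * n + k)).indicator fun _ => c1)
    (fun _ => hXadp _) (fun _ => hXint _)
    (fun _ => stronglyMeasurable_const.indicator (hAmeas _))
    (fun _ => (integrable_const c1).indicator (ℱ.le _ _ (hAmeas _))) hdrift
  convert hsuper using 1
  funext n ω
  simp only [Pi.sub_apply, Finset.sum_apply, Finset.mul_sum, ← Set.indicator_const_mul, mul_one]

/-- Under hypotheses (i)–(iii), for each `0 ≤ k < m` the process
`c1 * G_{n,k} - X_{m n + k}` is a supermartingale with respect to the
filtration `(F_{m n + k})ₙ`, where `G_{n,k} = ∑_{i<n} 1_{A_{m i + k}}`. -/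
theorem supermartingale_skip {Ω : Type*} {m0 : MeasurableSpace Ω} {μ : Measure Ω}
    [IsProbabilityMeasure μ] (ℱ : Filtration ℕ m0)
    (hF0 : ∀ s : Set Ω, MeasurableSet[ℱ 0] s → μ s = 0 ∨ μ s = 1)
    (X : ℕ → Ω → ℝ) (A : ℕ → Set Ω)
    (hXadp : ∀ n, StronglyMeasurable[ℱ n] (X n))
    (hAmeas : ∀ n, MeasurableSet[ℱ n] (A n))
    (hXint : ∀ n, Integrable (X n) μ)
    (c1 : ℝ) (hc1 : 0 < c1) (m : ℕ) (hm : 0 < m)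
    (h1 : ∀ n, ∀ᵐ ω ∂μ, |X (n + 1) ω - X n ω| ≤ 1)
    (h2 : ∀ n, 0 ≤ᵐ[μ] μ[fun ω => X (n + 1) ω - X n ω | ℱ n])
    (h3 : ∀ n, ∀ᵐ ω ∂μ, ω ∈ A n →
      c1 < (μ[fun ω => X (n + m) ω - X n ω | ℱ n]) ω)
    (k : ℕ) (hk : k < m) :
    Supermartingale
      (fun n ω =>
        c1 * (∑ i ∈ Finset.range n, (A (m * i + k)).indicator (fun _ => (1 : ℝ)) ω)
          - X (m * n + k) ω)
      (skipFiltration ℱ m k) μ :=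
  supermartingale_skip_general ℱ X A hXadp hAmeas hXint c1 m h2 h3 k
end

section
/- Under hypotheses (iv)–(vi), there exists a constant c ≥ 0 such that for all n ≥ 0, E[G_n] ≥ (c4/(c3 + c4))·n − c. -/
/-!
Split `E[f (n+1) - f n]` over `A n` and its complement. On `A n` the increment is below `c3` by (v);
on the `ℱ n`-measurable set `(A n)ᶜ` its integral equals that of its conditional expectation, which is
below `-c4` by (vi). Hence `E[f (n+1)] - E[f n] ≤ (c3 + c4) P(A n) - c4`, and telescoping against the
lower bound (iv) on `E[f n]` gives `(c3 + c4) E[G n] ≥ c4 n - c2 - E[f 0]`.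
-/

open MeasureTheory Filter

section

variable {Ω : Type*} {m m0 : MeasurableSpace Ω} {μ : Measure Ω} {s : Set Ω} {X : Ω → ℝ}

lemma setIntegral_le_mul_measureReal [IsFiniteMeasure μ] (hX : Integrable X μ)
    (hs : MeasurableSet s) {a : ℝ} (h : ∀ᵐ ω ∂μ, ω ∈ s → X ω ≤ a) :
    ∫ ω in s, X ω ∂μ ≤ a * μ.real s :=
  calc ∫ ω in s, X ω ∂μ ≤ ∫ _ in s, a ∂μ :=
        setIntegral_mono_on_ae hX.integrableOn (integrableOn_const (measure_ne_top μ s)) hs h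
    _ = a * μ.real s := by rw [setIntegral_const, smul_eq_mul, mul_comm]

lemma integral_le_of_le_on_of_condExp_le_on_compl [IsProbabilityMeasure μ] (hm : m ≤ m0)
    (hX : Integrable X μ) (hs : MeasurableSet[m] s) {a b : ℝ}
    (hin : ∀ᵐ ω ∂μ, ω ∈ s → X ω ≤ a) (hout : ∀ᵐ ω ∂μ, ω ∉ s → μ[X|m] ω ≤ -b) :
    ∫ ω, X ω ∂μ ≤ (a + b) * μ.real s - b := by
  have hs0 : MeasurableSet s := hm s hs
  have h_in := setIntegral_le_mul_measureReal hX hs0 hin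
  have h_out : ∫ ω in sᶜ, X ω ∂μ ≤ -b * μ.real sᶜ := by
    rw [← setIntegral_condExp hm hX hs.compl]
    exact setIntegral_le_mul_measureReal integrable_condExp hs0.compl hout
  rw [measureReal_compl hs0, probReal_univ] at h_out
  rw [← integral_add_compl hs0 hX]
  linarith

end

lemma div_mul_sub_le_sum_of_sub_le {x p : ℕ → ℝ} {a b c : ℝ} (hab : 0 < a + b)
    (hx : ∀ n, -c ≤ x n) (hstep : ∀ n, x (n + 1) - x n ≤ (a + b) * p n - b) (n : ℕ) :
    b / (a + b) * n - (c + x 0) / (a + b) ≤ ∑ i ∈ Finset.range n, p i := by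
  have htel : x n - x 0 ≤ (a + b) * ∑ i ∈ Finset.range n, p i - b * n :=
    calc x n - x 0 = ∑ i ∈ Finset.range n, (x (i + 1) - x i) := (Finset.sum_range_sub x n).symm
      _ ≤ ∑ i ∈ Finset.range n, ((a + b) * p i - b) := Finset.sum_le_sum fun i _ => hstep i
      _ = (a + b) * ∑ i ∈ Finset.range n, p i - b * n := by
        rw [Finset.sum_sub_distrib, Finset.mul_sum]; simp [mul_comm]
  rw [div_mul_eq_mul_div, div_sub_div_same, div_le_iff₀ hab]
  linarith [hx n]

theorem expected_G_lower_bound_general {Ω : Type*} {m0 : MeasurableSpace Ω} {μ : Measure Ω}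
    [IsProbabilityMeasure μ] (ℱ : Filtration ℕ m0)
    (f : ℕ → Ω → ℝ) (A : ℕ → Set Ω)
    (hAmeas : ∀ n, MeasurableSet[ℱ n] (A n))
    (hfint : ∀ n, Integrable (f n) μ)
    (c2 c3 c4 : ℝ) (hc3 : 0 < c3) (hc4 : 0 < c4)
    (h4 : ∀ n, ∀ᵐ ω ∂μ, -c2 < f n ω)
    (h5 : ∀ n, ∀ᵐ ω ∂μ,
      (f (n + 1) ω - f n ω) * (A n).indicator (fun _ => (1 : ℝ)) ω < c3)
    (h6 : ∀ n, ∀ᵐ ω ∂μ, ω ∉ A n →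
      (μ[fun ω => f (n + 1) ω - f n ω | ℱ n]) ω < -c4) :
    ∃ c : ℝ, 0 ≤ c ∧ ∀ n : ℕ,
      c4 / (c3 + c4) * (n : ℝ) - c ≤
        ∫ ω, (∑ i ∈ Finset.range n, (A i).indicator (fun _ => (1 : ℝ)) ω) ∂μ := by
  have hA (i : ℕ) : MeasurableSet (A i) := ℱ.le i _ (hAmeas i)
  have hbound (n : ℕ) : -c2 ≤ ∫ ω, f n ω ∂μ := by
    simpa using integral_mono_ae (integrable_const _) (hfint n) ((h4 n).mono fun ω h => h.le)
  have hstep (n : ℕ) :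
      ∫ ω, f (n + 1) ω ∂μ - ∫ ω, f n ω ∂μ ≤ (c3 + c4) * μ.real (A n) - c4 := by
    rw [← integral_sub (hfint _) (hfint n)]
    refine integral_le_of_le_on_of_condExp_le_on_compl (ℱ.le n) ((hfint _).sub (hfint n))
      (hAmeas n) ?_ ?_
    · filter_upwards [h5 n] with ω hω hmem
      simpa [hmem] using hω.le
    · filter_upwards [h6 n] with ω hω hmem using (hω hmem).le
  refine ⟨(c2 + ∫ ω, f 0 ω ∂μ) / (c3 + c4),
    div_nonneg (by linarith [hbound 0]) (by positivity), fun n => ?_⟩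
  rw [integral_finsetSum _ fun i _ => (integrable_const 1).indicator (hA i)]
  simpa [integral_indicator_const _ (hA _)] using
    div_mul_sub_le_sum_of_sub_le (by positivity) hbound hstep n

/-- Under hypotheses (iv)–(vi), there is a constant `c ≥ 0` such that
`E[Gₙ] ≥ (c4/(c3+c4)) * n - c` for all `n`, where `Gₙ = ∑_{i<n} 1_{A_i}`. -/
theorem expected_G_lower_bound {Ω : Type*} {m0 : MeasurableSpace Ω} {μ : Measure Ω}
    [IsProbabilityMeasure μ] (ℱ : Filtration ℕ m0)
    (hF0 : ∀ s : Set Ω, MeasurableSet[ℱ 0] s → μ s = 0 ∨ μ s = 1)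
    (f : ℕ → Ω → ℝ) (A : ℕ → Set Ω)
    (hfadp : ∀ n, StronglyMeasurable[ℱ n] (f n))
    (hAmeas : ∀ n, MeasurableSet[ℱ n] (A n))
    (hfint : ∀ n, Integrable (f n) μ)
    (c2 c3 c4 : ℝ) (hc2 : 0 < c2) (hc3 : 0 < c3) (hc4 : 0 < c4)
    (h4 : ∀ n, ∀ᵐ ω ∂μ, -c2 < f n ω)
    (h5 : ∀ n, ∀ᵐ ω ∂μ,
      (f (n + 1) ω - f n ω) * (A n).indicator (fun _ => (1 : ℝ)) ω < c3)
    (h6 : ∀ n, ∀ᵐ ω ∂μ, ω ∉ A n →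
      (μ[fun ω => f (n + 1) ω - f n ω | ℱ n]) ω < -c4) :
    ∃ c : ℝ, 0 ≤ c ∧ ∀ n : ℕ,
      c4 / (c3 + c4) * (n : ℝ) - c ≤
        ∫ ω, (∑ i ∈ Finset.range n, (A i).indicator (fun _ => (1 : ℝ)) ω) ∂μ :=
  expected_G_lower_bound_general ℱ f A hAmeas hfint c2 c3 c4 hc3 hc4 h4 h5 h6
end

section
/- Under hypotheses (i)–(iii), for each integer k with 0 ≤ k < m there exists a constant c ≥ 0 such that for all n ≥ 0, E[X_{mn+k}] ≥ c1·E[G_{n,k}] − c. -/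
open MeasureTheory

/-!
By (ii), `X` is a submartingale, so `E[Δ_m X_n | F_n] ≥ 0` a.s., and `> c1` on `A_n` by (iii);
integrating gives `E[X_{n+m}] ≥ E[X_n] + c1 P(A_n)`. Iterating this along `k, m + k, 2m + k, …`
yields `E[X_{mn+k}] ≥ E[X_k] + c1 E[G_{n,k}]`, so `c = |E[X_k]|` works.
-/

theorem add_sum_range_le_of_add_le_add_shift {α : Type*} [AddCommMonoid α] [PartialOrder α]
    [IsOrderedAddMonoid α] {a b : ℕ → α} {m : ℕ} (h : ∀ n, a n + b n ≤ a (n + m)) (k n : ℕ) :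
    a k + ∑ i ∈ Finset.range n, b (m * i + k) ≤ a (m * n + k) := by
  induction n with
  | zero => simp
  | succ n ih =>
    calc a k + ∑ i ∈ Finset.range (n + 1), b (m * i + k)
        = (a k + ∑ i ∈ Finset.range n, b (m * i + k)) + b (m * n + k) := by
          rw [Finset.sum_range_succ, add_assoc]
      _ ≤ a (m * n + k) + b (m * n + k) := add_le_add_left ih _
      _ ≤ a (m * (n + 1) + k) := by
          rw [show m * (n + 1) + k = m * n + k + m by ring]
          exact h _

section

variable {Ω : Type*} {m0 : MeasurableSpace Ω} {μ : Measure Ω}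

theorem integral_sum_indicator_one [IsFiniteMeasure μ] {ι : Type*} (s : Finset ι)
    {A : ι → Set Ω} (hA : ∀ i, MeasurableSet (A i)) :
    ∫ ω, (∑ i ∈ s, (A i).indicator (fun _ => (1 : ℝ)) ω) ∂μ = ∑ i ∈ s, μ.real (A i) := by
  rw [integral_finsetSum _ fun i _ => (integrable_const (1 : ℝ)).indicator (hA i)]
  exact Finset.sum_congr rfl fun i _ => integral_indicator_one (hA i)

theorem MeasureTheory.Submartingale.integral_add_mul_measureReal_le [IsFiniteMeasure μ] {ι : Type*}
    [Preorder ι] {ℱ : Filtration ι m0} {f : ι → Ω → ℝ} (hf : Submartingale f ℱ μ) {i j : ι}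
    (hij : i ≤ j) {s : Set Ω} (hs : MeasurableSet[ℱ i] s) {c : ℝ}
    (hc : ∀ᵐ ω ∂μ, ω ∈ s → c ≤ μ[f j - f i | ℱ i] ω) :
    ∫ ω, f i ω ∂μ + c * μ.real s ≤ ∫ ω, f j ω ∂μ := by
  have hs' : MeasurableSet s := ℱ.le i _ hs
  have hindicator_le : s.indicator (fun _ => c) ≤ᵐ[μ] μ[f j - f i | ℱ i] := by
    filter_upwards [hc, hf.condExp_sub_nonneg hij] with ω hcω hnonneg
    by_cases hω : ω ∈ s
    · simpa [hω] using hcω hω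
    · simpa [hω] using hnonneg
  have : c * μ.real s ≤ ∫ ω, f j ω ∂μ - ∫ ω, f i ω ∂μ :=
    calc c * μ.real s = ∫ ω, s.indicator (fun _ => c) ω ∂μ := by
          rw [integral_indicator_const _ hs', smul_eq_mul, mul_comm]
      _ ≤ ∫ ω, (μ[f j - f i | ℱ i]) ω ∂μ :=
          integral_mono_ae ((integrable_const c).indicator hs') integrable_condExp hindicator_le
      _ = ∫ ω, f j ω ∂μ - ∫ ω, f i ω ∂μ := by
          rw [integral_condExp (ℱ.le i), integral_sub' (hf.integrable j) (hf.integrable i)]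
  linarith

end

theorem expected_X_lower_bound_general {Ω : Type*} {m0 : MeasurableSpace Ω} {μ : Measure Ω}
    [IsProbabilityMeasure μ] (ℱ : Filtration ℕ m0)
    (X : ℕ → Ω → ℝ) (A : ℕ → Set Ω)
    (hXadp : ∀ n, StronglyMeasurable[ℱ n] (X n))
    (hAmeas : ∀ n, MeasurableSet[ℱ n] (A n))
    (hXint : ∀ n, Integrable (X n) μ)
    (c1 : ℝ) (m : ℕ)
    (h2 : ∀ n, 0 ≤ᵐ[μ] μ[fun ω => X (n + 1) ω - X n ω | ℱ n])
    (h3 : ∀ n, ∀ᵐ ω ∂μ, ω ∈ A n →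
      c1 < (μ[fun ω => X (n + m) ω - X n ω | ℱ n]) ω)
    (k : ℕ) :
    ∃ c : ℝ, 0 ≤ c ∧ ∀ n : ℕ,
      c1 * (∫ ω, (∑ i ∈ Finset.range n,
          (A (m * i + k)).indicator (fun _ => (1 : ℝ)) ω) ∂μ) - c ≤
        ∫ ω, X (m * n + k) ω ∂μ := by
  have hsub : Submartingale X ℱ μ := submartingale_of_condExp_sub_nonneg_nat hXadp hXint h2
  have hblock : ∀ n, ∫ ω, X n ω ∂μ + c1 * μ.real (A n) ≤ ∫ ω, X (n + m) ω ∂μ := fun n =>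
    hsub.integral_add_mul_measureReal_le (Nat.le_add_right n m) (hAmeas n)
      (by filter_upwards [h3 n] with ω hω hA using (hω hA).le)
  refine ⟨|∫ ω, X k ω ∂μ|, abs_nonneg _, fun n => ?_⟩
  have hiterate := add_sum_range_le_of_add_le_add_shift hblock k n
  rw [integral_sum_indicator_one _ fun i => ℱ.le _ _ (hAmeas _), Finset.mul_sum]
  linarith [neg_abs_le (∫ ω, X k ω ∂μ)]

/-- Under hypotheses (i)–(iii), for each `0 ≤ k < m` there is a constant `c ≥ 0`
such that `E[X_{m n + k}] ≥ c1 * E[G_{n,k}] - c` for all `n`, where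
`G_{n,k} = ∑_{i<n} 1_{A_{m i + k}}`. -/
theorem expected_X_lower_bound {Ω : Type*} {m0 : MeasurableSpace Ω} {μ : Measure Ω}
    [IsProbabilityMeasure μ] (ℱ : Filtration ℕ m0)
    (hF0 : ∀ s : Set Ω, MeasurableSet[ℱ 0] s → μ s = 0 ∨ μ s = 1)
    (X : ℕ → Ω → ℝ) (A : ℕ → Set Ω)
    (hXadp : ∀ n, StronglyMeasurable[ℱ n] (X n))
    (hAmeas : ∀ n, MeasurableSet[ℱ n] (A n))
    (hXint : ∀ n, Integrable (X n) μ)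
    (c1 : ℝ) (hc1 : 0 < c1) (m : ℕ) (hm : 0 < m)
    (h1 : ∀ n, ∀ᵐ ω ∂μ, |X (n + 1) ω - X n ω| ≤ 1)
    (h2 : ∀ n, 0 ≤ᵐ[μ] μ[fun ω => X (n + 1) ω - X n ω | ℱ n])
    (h3 : ∀ n, ∀ᵐ ω ∂μ, ω ∈ A n →
      c1 < (μ[fun ω => X (n + m) ω - X n ω | ℱ n]) ω)
    (k : ℕ) (hk : k < m) :
    ∃ c : ℝ, 0 ≤ c ∧ ∀ n : ℕ,
      c1 * (∫ ω, (∑ i ∈ Finset.range n,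
          (A (m * i + k)).indicator (fun _ => (1 : ℝ)) ω) ∂μ) - c ≤
        ∫ ω, X (m * n + k) ω ∂μ :=
  expected_X_lower_bound_general ℱ X A hXadp hAmeas hXint c1 m h2 h3 k
end

section
/- Let (X_n)_{n≥0} be real random variables, m a positive integer, and c9 ≥ 0 a constant such that almost surely X_n ≤ n + c9 for all n. Set Y_n = max{X_{mn}, X_{mn+1}, …, X_{mn+m−1}} and suppose there exist c7 > 0 and an integer N such that E[Y_n] > c7·n for all n ≥ N. Then there exist constants c5 > 0 and δ > 0 such that P(limsup_{n→∞} X_n/n > c5) > δ. -/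
/-! Since `X k ≤ k + c9`, the block maximum `Yₙ` is at most `m (n + 1) + c9 ≤ 2 m n` for large `n`.
Splitting `E[Yₙ]` over the event `Bₙ = {Yₙ > c7 n / 2}` gives `c7 n < c7 n / 2 + 2 m n P(Bₙ)`,
so `P(Bₙ) ≥ c7 / (4m)` eventually. By the reverse Fatou lemma `Bₙ` then happens infinitely often
with probability at least `c7 / (4m)`, and on that event `X k / k ≥ c7 / (4m)` for infinitely
many `k`, because the index `k = m n + j` of the maximum satisfies `k ≤ 2 m n`. -/

open MeasureTheory Filter Set
open scoped ENNReal

section ReverseFatou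

variable {Ω : Type*} {m0 : MeasurableSpace Ω} {μ : Measure Ω} [IsFiniteMeasure μ]

theorem le_measure_limsup_atTop_of_forall {s : ℕ → Set Ω} {δ : ℝ≥0∞}
    (hs : ∀ n, NullMeasurableSet (s n) μ) (hδ : ∀ n, δ ≤ μ (s n)) :
    δ ≤ μ (limsup s atTop) := by
  have hanti : Antitone fun n => ⋃ i ≥ n, s i := fun k l hkl =>
    biUnion_mono (fun i (hi : l ≤ i) => hkl.trans hi) fun _ _ => le_rfl
  rw [limsup_eq_iInf_iSup_of_nat]
  simp only [iSup_eq_iUnion, iInf_eq_iInter]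
  rw [hanti.measure_iInter (fun n => .biUnion (to_countable _) fun i _ => hs i)
    ⟨0, measure_ne_top _ _⟩]
  exact le_iInf fun n =>
    (hδ n).trans (measure_mono (subset_iUnion₂_of_subset n le_rfl subset_rfl))

theorem le_measure_limsup_atTop {s : ℕ → Set Ω} {δ : ℝ≥0∞}
    (hs : ∀ᶠ n in atTop, NullMeasurableSet (s n) μ) (hδ : ∀ᶠ n in atTop, δ ≤ μ (s n)) :
    δ ≤ μ (limsup s atTop) := by
  obtain ⟨N, hN⟩ := eventually_atTop.1 (hs.and hδ)
  rw [← limsup_nat_add s N]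
  exact le_measure_limsup_atTop_of_forall (fun n => (hN _ le_add_self).1)
    fun n => (hN _ le_add_self).2

end ReverseFatou

theorem integral_le_add_mul_measureReal_lt {Ω : Type*} {m0 : MeasurableSpace Ω}
    {μ : Measure Ω} [IsProbabilityMeasure μ] {Y : Ω → ℝ} {C : ℝ}
    (hY : Integrable Y μ) (hC : ∀ᵐ ω ∂μ, Y ω ≤ C) (a : ℝ) :
    ∫ ω, Y ω ∂μ ≤ a + (C - a) * μ.real {ω | a < Y ω} := by
  set s := {ω | a < Y ω}
  have hs : NullMeasurableSet s μ := hY.aemeasurable.nullMeasurable measurableSet_Ioi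
  have hbound : ∀ᵐ ω ∂μ, Y ω ≤ a + s.indicator (fun _ => C - a) ω := by
    filter_upwards [hC] with ω hω
    by_cases hωs : ω ∈ s
    · simp only [indicator_of_mem hωs]; linarith
    · simpa [indicator_of_notMem hωs, s] using hωs
  calc ∫ ω, Y ω ∂μ ≤ ∫ ω, a + s.indicator (fun _ => C - a) ω ∂μ :=
        integral_mono_ae hY ((integrable_const a).add
          ((integrable_const (C - a)).indicator₀ hs)) hbound
    _ = a + (C - a) * μ.real s := by
        rw [integral_add (integrable_const a) ((integrable_const (C - a)).indicator₀ hs),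
          integral_indicator₀ hs, integral_const, setIntegral_const]
        simp [mul_comm]

section BlockMax

variable {m : ℕ} (hm : 0 < m)

def blockMax (x : ℕ → ℝ) (n : ℕ) : ℝ :=
  (Finset.range m).sup' (Finset.nonempty_range_iff.mpr hm.ne') fun j => x (m * n + j)

variable {hm} {x : ℕ → ℝ} {c : ℝ}

theorem exists_blockMax_eq (n : ℕ) : ∃ j < m, blockMax hm x n = x (m * n + j) := by
  obtain ⟨j, hj, hmax⟩ := Finset.exists_mem_eq_sup' (Finset.nonempty_range_iff.mpr hm.ne')
    fun j => x (m * n + j)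
  exact ⟨j, Finset.mem_range.1 hj, hmax⟩

theorem blockMax_le_of_le_add (hx : ∀ k, x k ≤ k + c) (n : ℕ) :
    blockMax hm x n ≤ m * (n + 1) + c := by
  obtain ⟨j, hj, hmax⟩ := exists_blockMax_eq (hm := hm) (x := x) n
  have hjm : (j : ℝ) ≤ m := by exact_mod_cast hj.le
  rw [hmax]
  have := hx (m * n + j)
  push_cast at this
  linarith

theorem isBoundedUnder_div_of_le_add (hx : ∀ k, x k ≤ k + c) :
    IsBoundedUnder (· ≤ ·) atTop fun k : ℕ => x k / k := by
  refine isBoundedUnder_of_eventually_le (a := 2) ?_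
  filter_upwards [eventually_ge_atTop 1,
    tendsto_natCast_atTop_atTop.eventually_ge_atTop c] with k hk hkc
  have hk : (1 : ℝ) ≤ k := by exact_mod_cast hk
  rw [div_le_iff₀ (by linarith)]
  linarith [hx k]

theorem frequently_le_div_of_frequently_lt_blockMax (hc : 0 ≤ c)
    (h : ∃ᶠ n in atTop, c * n < blockMax hm x n) :
    ∃ᶠ k in atTop, c / (2 * m) ≤ x k / k := by
  rw [frequently_atTop] at h ⊢
  intro K
  obtain ⟨n, hn, hlt⟩ := h (max K 1)
  obtain ⟨j, hj, hmax⟩ := exists_blockMax_eq (hm := hm) (x := x) n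
  refine ⟨m * n + j, ?_, ?_⟩
  · have := Nat.le_mul_of_pos_left n hm
    omega
  have hn1 : (1 : ℝ) ≤ n := by exact_mod_cast (le_max_right _ _).trans hn
  have hm1 : (1 : ℝ) ≤ m := by exact_mod_cast hm
  have hjm : (j : ℝ) < m := by exact_mod_cast hj
  have hk : ((m * n + j : ℕ) : ℝ) ≤ 2 * m * n := by push_cast; nlinarith
  rw [div_le_div_iff₀ (by positivity) (by push_cast; positivity), ← hmax]
  nlinarith

theorem le_limsup_div_of_frequently_lt_blockMax (hx : ∀ k, x k ≤ k + c) {a : ℝ} (ha : 0 ≤ a)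
    (h : ∃ᶠ n in atTop, a * n < blockMax hm x n) :
    a / (2 * m) ≤ limsup (fun k : ℕ => x k / k) atTop :=
  le_limsup_of_frequently_le (frequently_le_div_of_frequently_lt_blockMax ha h)
    (isBoundedUnder_div_of_le_add hx)

end BlockMax

theorem eventually_ofReal_le_measure_lt_blockMax {Ω : Type*} {m0 : MeasurableSpace Ω}
    {μ : Measure Ω} [IsProbabilityMeasure μ] {X : ℕ → Ω → ℝ} {m : ℕ} (hm : 0 < m) {c9 c7 : ℝ}
    (hbound : ∀ᵐ ω ∂μ, ∀ k : ℕ, X k ω ≤ k + c9) (hc7 : 0 < c7)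
    (hY : ∀ᶠ n : ℕ in atTop, c7 * n < ∫ ω, blockMax hm (X · ω) n ∂μ) :
    ∀ᶠ n : ℕ in atTop, NullMeasurableSet {ω | c7 / 2 * n < blockMax hm (X · ω) n} μ ∧
      ENNReal.ofReal (c7 / (4 * m)) ≤ μ {ω | c7 / 2 * n < blockMax hm (X · ω) n} := by
  filter_upwards [hY, eventually_ge_atTop 1,
    tendsto_natCast_atTop_atTop.eventually_ge_atTop (1 + c9)] with n hYn hn hnc
  have hn : (1 : ℝ) ≤ n := by exact_mod_cast hn
  have hm1 : (1 : ℝ) ≤ m := by exact_mod_cast hm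
  have hint : Integrable (fun ω => blockMax hm (X · ω) n) μ :=
    .of_integral_ne_zero (by nlinarith)
  have hmarkov := integral_le_add_mul_measureReal_lt hint
    (hbound.mono fun ω hω => blockMax_le_of_le_add hω n) (c7 / 2 * n)
  refine ⟨hint.aemeasurable.nullMeasurable measurableSet_Ioi, ?_⟩
  rw [ENNReal.ofReal_le_iff_le_toReal (measure_ne_top _ _), ← Measure.real,
    div_le_iff₀ (by positivity)]
  set P := μ.real {ω | c7 / 2 * n < blockMax hm (X · ω) n}
  have hP : 0 ≤ P := measureReal_nonneg
  have hC : m * (n + 1) + c9 ≤ 2 * m * n := by nlinarith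
  nlinarith [mul_le_mul_of_nonneg_right hC hP, mul_nonneg (by positivity : 0 ≤ c7 / 2 * n) hP]

theorem positive_probability_limsup_general {Ω : Type*} {m0 : MeasurableSpace Ω}
    {μ : Measure Ω} [IsProbabilityMeasure μ]
    (X : ℕ → Ω → ℝ) (m : ℕ) (hm : 0 < m) (c9 : ℝ)
    (hbound : ∀ᵐ ω ∂μ, ∀ n : ℕ, X n ω ≤ (n : ℝ) + c9)
    (c7 : ℝ) (hc7 : 0 < c7) (N : ℕ)
    (hY : ∀ n ≥ N,
      c7 * (n : ℝ) <
        ∫ ω, ((Finset.range m).sup' (Finset.nonempty_range_iff.mpr hm.ne')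
          fun j => X (m * n + j) ω) ∂μ) :
    ∃ c5 : ℝ, 0 < c5 ∧ ∃ δ : ℝ, 0 < δ ∧
      δ < (μ {ω | c5 < atTop.limsup fun n => X n ω / n}).toReal := by
  set B : ℕ → Set Ω := fun n => {ω | c7 / 2 * n < blockMax hm (X · ω) n}
  have hlarge := eventually_ofReal_le_measure_lt_blockMax hm hbound hc7
    (eventually_atTop.2 ⟨N, hY⟩)
  have hlimsup : ENNReal.ofReal (c7 / (4 * m)) ≤ μ (limsup B atTop) :=
    le_measure_limsup_atTop (hlarge.mono fun _ h => h.1) (hlarge.mono fun _ h => h.2)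
  have hm' : (0 : ℝ) < m := by exact_mod_cast hm
  have hc : c7 / (8 * m) < c7 / (4 * m) :=
    div_lt_div_of_pos_left hc7 (by positivity) (by linarith)
  have hsub : (limsup B atTop : Set Ω) ≤ᵐ[μ]
      {ω | c7 / (8 * m) < atTop.limsup fun n => X n ω / n} := by
    filter_upwards [hbound] with ω hω (hmem : ω ∈ limsup B atTop)
    exact hc.trans_le <| Eq.trans_le (by ring) <| le_limsup_div_of_frequently_lt_blockMax hω
      (by positivity) (mem_limsup_iff_frequently_mem.1 hmem)
  refine ⟨c7 / (8 * m), by positivity, c7 / (8 * m), by positivity, hc.trans_le ?_⟩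
  exact (ENNReal.ofReal_le_iff_le_toReal (measure_ne_top _ _)).1
    (hlimsup.trans (measure_mono_ae hsub))

/-- If a.s. `Xₙ ≤ n + c9` for all `n`, and the expectations of
`Yₙ = max { X_{m n}, …, X_{m n + m - 1} }` satisfy `E[Yₙ] > c7 * n` for all large
`n`, then there are constants `c5 > 0` and `δ > 0` with
`P(limsup Xₙ/n > c5) > δ`. -/
theorem positive_probability_limsup {Ω : Type*} {m0 : MeasurableSpace Ω}
    {μ : Measure Ω} [IsProbabilityMeasure μ]
    (X : ℕ → Ω → ℝ) (m : ℕ) (hm : 0 < m) (c9 : ℝ) (hc9 : 0 ≤ c9)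
    (hbound : ∀ᵐ ω ∂μ, ∀ n : ℕ, X n ω ≤ (n : ℝ) + c9)
    (c7 : ℝ) (hc7 : 0 < c7) (N : ℕ)
    (hY : ∀ n ≥ N,
      c7 * (n : ℝ) <
        ∫ ω, ((Finset.range m).sup' (Finset.nonempty_range_iff.mpr hm.ne')
          fun j => X (m * n + j) ω) ∂μ) :
    ∃ c5 : ℝ, 0 < c5 ∧ ∃ δ : ℝ, 0 < δ ∧
      δ < (μ {ω | c5 < atTop.limsup fun n => X n ω / n}).toReal :=
  positive_probability_limsup_general (m0 := m0) X m hm c9 hbound c7 hc7 N hY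
end
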